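/- Semantic soundness of the EvtSet rule: let ℰ₀, …, ℰₙ be events, pre, pst ⊆ S, R, G ⊆ S × S, and for each i ≤ n let presᵢ, pstsᵢ ⊆ S and Rsᵢ, Gsᵢ ⊆ S × S. If (1) ⊨ ℰᵢ sat ⟨presᵢ, Rsᵢ, Gsᵢ, pstsᵢ⟩ for all i ≤ n, (2) pstsᵢ ⊆ presⱼ for all i, j ≤ n, (3) pre ⊆ presᵢ for all i ≤ n, (4) R ⊆ Rsᵢ for all i ≤ n, (5) Gsᵢ ⊆ G for all i ≤ n, (6) pstsᵢ ⊆ pst for all i ≤ n, (7) stable(pre, R), and (8) Id ⊆ G, then ⊨ EvtSys {ℰ₀,…,ℰₙ} sat ⟨pre,R,G,pst⟩. -/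

import Mathlib

set_option autoImplicit false

namespace PiCore

/-! ## Syntax of PiCore -/

/-- PiCore programs; `term` is the terminated program `⊥`. -/
inductive Prog (S : Type) : Type where
  | term : Prog S
  | basic : (S → S) → Prog S
  | seq : Prog S → Prog S → Prog S
  | cond : Set S → Prog S → Prog S → Prog S
  | while' : Set S → Prog S → Prog S
  | await : Set S → Prog S → Prog S
  | nondt : Set (S × S) → Prog S

/-! ## Small-step semantics of programs -/

mutual
/-- Small-step program semantics `(P, s) -c→ (P', s')`. -/
inductive PStep {S : Type} : Prog S × S → Prog S × S → Prop where
  | basic (f : S → S) (s : S) : PStep (.basic f, s) (.term, f s)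
  | seq1 {P₁ : Prog S} {s s' : S} (P₂ : Prog S) :
      PStep (P₁, s) (.term, s') → PStep (.seq P₁ P₂, s) (P₂, s')
  | seq2 {P₁ P₁' : Prog S} {s s' : S} (P₂ : Prog S) :
      PStep (P₁, s) (P₁', s') → P₁' ≠ .term → PStep (.seq P₁ P₂, s) (.seq P₁' P₂, s')
  | condT {b : Set S} {s : S} (P₁ P₂ : Prog S) : s ∈ b → PStep (.cond b P₁ P₂, s) (P₁, s)
  | condF {b : Set S} {s : S} (P₁ P₂ : Prog S) : s ∉ b → PStep (.cond b P₁ P₂, s) (P₂, s)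
  | whileT {b : Set S} {s : S} (P : Prog S) : s ∈ b →
      PStep (.while' b P, s) (.seq P (.while' b P), s)
  | whileF {b : Set S} {s : S} (P : Prog S) : s ∉ b → PStep (.while' b P, s) (.term, s)
  | await {b : Set S} {s s' : S} {P : Prog S} : s ∈ b →
      PStepStar (P, s) (.term, s') → PStep (.await b P, s) (.term, s')
  | nondt {r : Set (S × S)} {s s' : S} : (s, s') ∈ r → PStep (.nondt r, s) (.term, s')

/-- Reflexive transitive closure of `PStep`. -/
inductive PStepStar {S : Type} : Prog S × S → Prog S × S → Prop where
  | refl (c : Prog S × S) : PStepStar c c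
  | step {c c' c'' : Prog S × S} : PStep c c' → PStepStar c' c'' → PStepStar c c''
end

/-! ## Events, event systems, parallel event systems -/

/-- A basic event: a label, a guard and a body. -/
structure EvtSpec (L S : Type) : Type where
  label : L
  guard : Set S
  body : Prog S

/-- Events: basic (non-triggered) events and anonymous (triggered) events. -/
inductive Event (L S : Type) : Type where
  | basic : EvtSpec L S → Event L S
  | anony : Prog S → Event L S

/-- Event contexts. -/
abbrev EvtCtx (L S K : Type) := K → Event L S

/-- The action component of a transition label: a program action `c`
or the occurrence of an event. -/
inductive Act (L S : Type) : Type where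
  | cmd : Act L S
  | evt : Event L S → Act L S

/-- Transition labels `t@κ`. -/
abbrev Lbl (L S K : Type) := Act L S × K

/-- Configurations at the level of events. -/
abbrev EConf (L S K : Type) := Event L S × S × EvtCtx L S K

/-- Labelled transitions of events. -/
inductive EStep {L S K : Type} [DecidableEq K] :
    EConf L S K → Lbl L S K → EConf L S K → Prop where
  | anony {P P' : Prog S} {s s' : S} (x : EvtCtx L S K) (κ : K) :
      PStep (P, s) (P', s') → EStep (.anony P, s, x) (.cmd, κ) (.anony P', s', x)
  | basic (α : EvtSpec L S) {s : S} (x : EvtCtx L S K) (κ : K) : s ∈ α.guard →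
      EStep (.basic α, s, x) (.evt (.basic α), κ)
        (.anony α.body, s, Function.update x κ (.basic α))

/-- Event systems: a finite event set `{ℰ₀, …, ℰₙ}` or a sequence `EvtSeq ℰ 𝒮`. -/
inductive EvtSys (L S : Type) : Type where
  | set : (n : ℕ) → (Fin (n + 1) → Event L S) → EvtSys L S
  | seq : Event L S → EvtSys L S → EvtSys L S

/-- Configurations at the level of event systems. -/
abbrev ESConf (L S K : Type) := EvtSys L S × S × EvtCtx L S K

/-- Labelled transitions of event systems. -/
inductive ESStep {L S K : Type} [DecidableEq K] :
    ESConf L S K → Lbl L S K → ESConf L S K → Prop where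
  | set {n : ℕ} {es : Fin (n + 1) → Event L S} (i : Fin (n + 1))
      {s s' : S} {x x' : EvtCtx L S K} {e' : Event L S} {κ : K} :
      EStep (es i, s, x) (.evt (es i), κ) (e', s', x') →
      ESStep (.set n es, s, x) (.evt (es i), κ) (.seq e' (.set n es), s', x')
  | seq1 {e e' : Event L S} (𝒮 : EvtSys L S) {s s' : S} {x x' : EvtCtx L S K}
      {l : Lbl L S K} :
      EStep (e, s, x) l (e', s', x') → e' ≠ .anony .term →
      ESStep (.seq e 𝒮, s, x) l (.seq e' 𝒮, s', x')
  | seq2 {e : Event L S} (𝒮 : EvtSys L S) {s s' : S} {x x' : EvtCtx L S K}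
      {l : Lbl L S K} :
      EStep (e, s, x) l (.anony .term, s', x') →
      ESStep (.seq e 𝒮, s, x) l (𝒮, s', x')

/-- Parallel event systems. -/
abbrev PES (L S K : Type) := K → EvtSys L S

/-- Configurations at the level of parallel event systems. -/
abbrev PConf (L S K : Type) := PES L S K × S × EvtCtx L S K

/-- Labelled transitions of parallel event systems. -/
inductive PESStep {L S K : Type} [DecidableEq K] :
    PConf L S K → Lbl L S K → PConf L S K → Prop where
  | par {ps : PES L S K} {κ : K} {t : Act L S} {s s' : S} {x x' : EvtCtx L S K}
      {es' : EvtSys L S} :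
      ESStep (ps κ, s, x) (t, κ) (es', s', x') →
      PESStep (ps, s, x) (t, κ) (Function.update ps κ es', s', x')

/-! ## Computations -/

section Computation

variable {σ S X : Type}

/-- An environment transition between two configurations:
the specification component is unchanged. -/
def EnvTr (c c' : σ × S × X) : Prop := c.1 = c'.1

/-- Computations: nonempty lists of configurations in which every consecutive pair
is an environment transition or an action transition of the semantics. -/
inductive Comp (step : σ × S × X → σ × S × X → Prop) : List (σ × S × X) → Prop where
  | one (c : σ × S × X) : Comp step [c]
  | env {sp : σ} {s₁ s₂ : S} {x₁ x₂ : X} {cs : List (σ × S × X)} :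
      Comp step ((sp, s₁, x₁) :: cs) → Comp step ((sp, s₂, x₂) :: (sp, s₁, x₁) :: cs)
  | act {c c' : σ × S × X} {cs : List (σ × S × X)} :
      step c c' → Comp step (c' :: cs) → Comp step (c :: c' :: cs)

/-- `Ψ(♯, s, x)`: the computations starting in the configuration `(♯, s, x)`. -/
def cpts (step : σ × S × X → σ × S × X → Prop) (sp : σ) (s : S) (x : X) :
    Set (List (σ × S × X)) :=
  {ϖ | Comp step ϖ ∧ ϖ.head? = some (sp, s, x)}

/-- The assumption `A(pre, R)`. -/
def Assum (pre : Set S) (R : Set (S × S)) : Set (List (σ × S × X)) :=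
  {ϖ | (∀ c, ϖ.head? = some c → c.2.1 ∈ pre) ∧
    ∀ i c c', ϖ[i]? = some c → ϖ[i + 1]? = some c' → EnvTr c c' →
      (c.2.1, c'.2.1) ∈ R}

/-- The commitment `C(G, pst)` (`fin` tells when a specification is terminated). -/
def Commit (step : σ × S × X → σ × S × X → Prop) (fin : σ → Prop)
    (G : Set (S × S)) (pst : Set S) : Set (List (σ × S × X)) :=
  {ϖ | (∀ i c c', ϖ[i]? = some c → ϖ[i + 1]? = some c' → step c c' →
      (c.2.1, c'.2.1) ∈ G) ∧
    ∀ c, ϖ.getLast? = some c → fin c.1 → c.2.1 ∈ pst}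

end Computation

/-! ## Validity of rely-guarantee specifications -/

section Validity

variable {L S K : Type}

/-- Program action transitions lifted to configurations with a trivial event context. -/
def pstepL {S : Type} (c c' : Prog S × S × Unit) : Prop :=
  PStep (c.1, c.2.1) (c'.1, c'.2.1)

/-- Action transitions of events (any label). -/
def estepAny [DecidableEq K] (c c' : EConf L S K) : Prop := ∃ l, EStep c l c'

/-- Action transitions of event systems (any label). -/
def esstepAny [DecidableEq K] (c c' : ESConf L S K) : Prop := ∃ l, ESStep c l c'

/-- Action transitions of parallel event systems (any label). -/
def pesstepAny [DecidableEq K] (c c' : PConf L S K) : Prop := ∃ l, PESStep c l c'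

/-- A terminated program. -/
def progFin : Prog S → Prop := fun P => P = .term

/-- A terminated event. -/
def evtFin : Event L S → Prop := fun e => e = .anony .term

/-- Event systems have no terminated form. -/
def esysFin : EvtSys L S → Prop := fun _ => False

/-- Parallel event systems have no terminated form. -/
def pesFin : PES L S K → Prop := fun _ => False

/-- Validity `⊨ P sat ⟨pre, R, G, pst⟩` for programs. -/
def progValid (P : Prog S) (pre : Set S) (R G : Set (S × S)) (pst : Set S) : Prop :=
  ∀ s : S, cpts pstepL P s () ∩ Assum pre R ⊆ Commit pstepL progFin G pst

/-- Validity `⊨ ℰ sat ⟨pre, R, G, pst⟩` for events. -/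
def evtValid [DecidableEq K] (e : Event L S) (pre : Set S) (R G : Set (S × S))
    (pst : Set S) : Prop :=
  ∀ (s : S) (x : EvtCtx L S K),
    cpts estepAny e s x ∩ Assum pre R ⊆ Commit estepAny evtFin G pst

/-- Validity `⊨ 𝒮 sat ⟨pre, R, G, pst⟩` for event systems. -/
def esysValid [DecidableEq K] (es : EvtSys L S) (pre : Set S) (R G : Set (S × S))
    (pst : Set S) : Prop :=
  ∀ (s : S) (x : EvtCtx L S K),
    cpts esstepAny es s x ∩ Assum pre R ⊆ Commit esstepAny esysFin G pst

/-- Validity `⊨ 𝒫𝒮 sat ⟨pre, R, G, pst⟩` for parallel event systems. -/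
def pesValid [DecidableEq K] (ps : PES L S K) (pre : Set S) (R G : Set (S × S))
    (pst : Set S) : Prop :=
  ∀ (s : S) (x : EvtCtx L S K),
    cpts pesstepAny ps s x ∩ Assum pre R ⊆ Commit pesstepAny pesFin G pst

end Validity

/-! ## The rely-guarantee proof system -/

/-- Specifications: programs, events, event systems, or parallel event systems. -/
inductive Spec (L S K : Type) : Type where
  | prog : Prog S → Spec L S K
  | evt : Event L S → Spec L S K
  | esys : EvtSys L S → Spec L S K
  | pes : PES L S K → Spec L S K

/-- A specification that is not a parallel event system. -/
def Spec.noPar {L S K : Type} : Spec L S K → Prop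
  | .pes _ => False
  | _ => True

/-- Uniform validity `⊨ ♯ sat ⟨pre, R, G, pst⟩`. -/
def RGValid {L S K : Type} [DecidableEq K] :
    Spec L S K → Set S → Set (S × S) → Set (S × S) → Set S → Prop
  | .prog P, pre, R, G, pst => progValid P pre R G pst
  | .evt e, pre, R, G, pst => evtValid (K := K) e pre R G pst
  | .esys es, pre, R, G, pst => esysValid (K := K) es pre R G pst
  | .pes ps, pre, R, G, pst => pesValid ps pre R G pst

/-- `stable f g`. -/
def stable {α : Type} (f : Set α) (g : Set (α × α)) : Prop :=
  ∀ x y, x ∈ f → (x, y) ∈ g → y ∈ f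

/-- The identity relation on a state space. -/
def idRel {S : Type} : Set (S × S) := {p | p.1 = p.2}

/-- The rely-guarantee proof system `⊢ ♯ sat ⟨pre, R, G, pst⟩`. -/
inductive RGDeriv {L S K : Type} [DecidableEq K] :
    Spec L S K → Set S → Set (S × S) → Set (S × S) → Set S → Prop where
  | basic {f : S → S} {pre pst : Set S} {R G : Set (S × S)} :
      pre ⊆ {s | f s ∈ pst} →
      {p : S × S | p.1 ∈ pre ∧ p.2 = f p.1} ⊆ G →
      stable pre R → stable pst R →
      RGDeriv (.prog (.basic f)) pre R G pst
  | seq {P Q : Prog S} {pre m pst : Set S} {R G : Set (S × S)} :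
      RGDeriv (.prog P) pre R G m → RGDeriv (.prog Q) m R G pst →
      RGDeriv (.prog (.seq P Q)) pre R G pst
  | cond {b : Set S} {P₁ P₂ : Prog S} {pre pst : Set S} {R G : Set (S × S)} :
      RGDeriv (.prog P₁) (pre ∩ b) R G pst →
      RGDeriv (.prog P₂) (pre ∩ bᶜ) R G pst →
      stable pre R → idRel ⊆ G →
      RGDeriv (.prog (.cond b P₁ P₂)) pre R G pst
  | whileR {b : Set S} {P : Prog S} {pre pst : Set S} {R G : Set (S × S)} :
      RGDeriv (.prog P) (pre ∩ b) R G pre →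
      pre ∩ bᶜ ⊆ pst →
      stable pre R → stable pst R → idRel ⊆ G →
      RGDeriv (.prog (.while' b P)) pre R G pst
  | awaitR {b : Set S} {P : Prog S} {pre pst : Set S} {R G : Set (S × S)} :
      (∀ V : S, RGDeriv (.prog P) (pre ∩ b ∩ {V}) idRel Set.univ
        ({s | (V, s) ∈ G} ∩ pst)) →
      stable pre R → stable pst R →
      RGDeriv (.prog (.await b P)) pre R G pst
  | nondt {r : Set (S × S)} {pre pst : Set S} {R G : Set (S × S)} :
      pre ⊆ {s | (∀ s', (s, s') ∈ r → s' ∈ pst) ∧ ∃ s', (s, s') ∈ r} →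
      {p : S × S | p.1 ∈ pre ∧ p ∈ r} ⊆ G →
      stable pre R → stable pst R →
      RGDeriv (.prog (.nondt r)) pre R G pst
  | conseq {sp : Spec L S K} {pre pre' pst pst' : Set S} {R R' G G' : Set (S × S)} :
      sp.noPar →
      pre ⊆ pre' → R ⊆ R' → G' ⊆ G → pst' ⊆ pst →
      RGDeriv sp pre' R' G' pst' →
      RGDeriv sp pre R G pst
  | unPre {P : Prog S} {pre pre' pst : Set S} {R G : Set (S × S)} :
      RGDeriv (.prog P) pre R G pst → RGDeriv (.prog P) pre' R G pst →
      RGDeriv (.prog P) (pre ∪ pre') R G pst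
  | intPost {P : Prog S} {pre pst pst' : Set S} {R G : Set (S × S)} :
      RGDeriv (.prog P) pre R G pst → RGDeriv (.prog P) pre R G pst' →
      RGDeriv (.prog P) pre R G (pst ∩ pst')
  | univPre {P : Prog S} {pre pst : Set S} {R G : Set (S × S)} :
      (∀ v ∈ pre, RGDeriv (.prog P) {v} R G pst) →
      RGDeriv (.prog P) pre R G pst
  | emptyPre {P : Prog S} {pst : Set S} {R G : Set (S × S)} :
      RGDeriv (.prog P) ∅ R G pst
  | inner {P : Prog S} {pre pst : Set S} {R G : Set (S × S)} :
      RGDeriv (.prog P) pre R G pst →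
      RGDeriv (.evt (.anony P)) pre R G pst
  | basicEvt {α : EvtSpec L S} {pre pst : Set S} {R G : Set (S × S)} :
      RGDeriv (.prog α.body) (pre ∩ α.guard) R G pst →
      stable pre R → idRel ⊆ G →
      RGDeriv (.evt (.basic α)) pre R G pst
  | evtSeq {e : Event L S} {𝒮 : EvtSys L S} {pre m pst : Set S} {R G : Set (S × S)} :
      RGDeriv (.evt e) pre R G m → RGDeriv (.esys 𝒮) m R G pst →
      RGDeriv (.esys (.seq e 𝒮)) pre R G pst
  | evtSet {n : ℕ} {es : Fin (n + 1) → Event L S} {pre pst : Set S}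
      {R G : Set (S × S)} {pres psts : Fin (n + 1) → Set S}
      {Rs Gs : Fin (n + 1) → Set (S × S)} :
      (∀ i, RGDeriv (.evt (es i)) (pres i) (Rs i) (Gs i) (psts i)) →
      (∀ i j, psts i ⊆ pres j) →
      (∀ i, pre ⊆ pres i) → (∀ i, psts i ⊆ pst) →
      (∀ i, R ⊆ Rs i) → (∀ i, Gs i ⊆ G) →
      stable pre R → idRel ⊆ G →
      RGDeriv (.esys (.set n es)) pre R G pst
  | par {ps : PES L S K} {pre pst : Set S} {R G : Set (S × S)}
      {pres psts : K → Set S} {Rs Gs : K → Set (S × S)} :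
      (∀ κ, RGDeriv (.esys (ps κ)) (pres κ) (Rs κ) (Gs κ) (psts κ)) →
      (∀ κ, pre ⊆ pres κ) → (∀ κ, psts κ ⊆ pst) →
      (∀ κ, Gs κ ⊆ G) → (∀ κ, R ⊆ Rs κ) →
      (∀ κ κ', κ ≠ κ' → Gs κ ⊆ Rs κ') →
      RGDeriv (.pes ps) pre R G pst


/-! ## Serialization and compositionality machinery -/

/-- The set of events occurring syntactically in an event system. -/
def EvtSys.evts {L S : Type} : EvtSys L S → Set (Event L S)
  | .set _ es => Set.range es
  | .seq e 𝒮 => insert e 𝒮.evts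

/-- Similarity (simulation) of two computations, possibly over different
specification types: same length, and at each position the states and event
contexts coincide and the steps are the same labelled action transitions
(resp. environment transitions). -/
def Similar {σ₁ σ₂ S X Λ : Type}
    (st₁ : σ₁ × S × X → Λ → σ₁ × S × X → Prop)
    (st₂ : σ₂ × S × X → Λ → σ₂ × S × X → Prop)
    (w₁ : List (σ₁ × S × X)) (w₂ : List (σ₂ × S × X)) : Prop :=
  w₁.length = w₂.length ∧
  ∀ i c₁ c₁' c₂ c₂', w₁[i]? = some c₁ → w₁[i + 1]? = some c₁' →
    w₂[i]? = some c₂ → w₂[i + 1]? = some c₂' →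
    c₁.2.1 = c₂.2.1 ∧ c₁.2.2 = c₂.2.2 ∧
    (∀ δ, st₁ c₁ δ c₁' ↔ st₂ c₂ δ c₂') ∧
    (EnvTr c₁ c₁' ↔ EnvTr c₂ c₂')

/-- The computations of an event (from an arbitrary initial state and
event context). -/
def cptsOfEvt {L S K : Type} [DecidableEq K] (e : Event L S) :
    Set (List (EConf L S K)) :=
  {w | Comp estepAny w ∧ ∃ s x, w.head? = some (e, s, x)}

/-- A computation `w` of a parallel event system and a family `cf` of
computations of event systems conjoin, `w ∝ cf` (Definition 2). -/
def Conjoin {L S K : Type} [DecidableEq K] (w : List (PConf L S K))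
    (cf : K → List (ESConf L S K)) : Prop :=
  (∀ κ, (cf κ).length = w.length) ∧
  (∀ (κ : K) (j : ℕ) c c', w[j]? = some c → (cf κ)[j]? = some c' →
    c.2.1 = c'.2.1 ∧ c.2.2 = c'.2.2 ∧ c.1 κ = c'.1) ∧
  (∀ (j : ℕ) c c', w[j]? = some c → w[j + 1]? = some c' →
    (EnvTr c c' ∧
      ∀ κ d d', (cf κ)[j]? = some d → (cf κ)[j + 1]? = some d' → EnvTr d d') ∨
    (∃ (t : Act L S) (κ₁ : K), PESStep c (t, κ₁) c' ∧
      (∀ d d', (cf κ₁)[j]? = some d → (cf κ₁)[j + 1]? = some d' →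
        ESStep d (t, κ₁) d') ∧
      (∀ κ, κ ≠ κ₁ → ∀ d d', (cf κ)[j]? = some d → (cf κ)[j + 1]? = some d' →
        EnvTr d d')))


/-!
Along a computation of `EvtSys {ℰ₀, …, ℰₙ}` in `A(pre, R)` we keep, for the current
configuration, computations of the events in the `A(presᵢ, Rsᵢ)` ending in the same state and
context: while the set is idle, one of every `ℰᵢ` in which `ℰᵢ` has not fired yet; while
`EvtSeq ℰ (EvtSys …)` runs, one of the triggered `ℰᵢ` ending in `ℰ`. Environment steps extend
them because `R ⊆ Rsᵢ`; action steps extend them (an action step always changes the program, so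
it is never read as an environment step) and lie in `Gsᵢ ⊆ G` by the validity of `ℰᵢ`; when
`ℰᵢ` terminates its state lies in `pstsᵢ ⊆ presⱼ`, so every `ℰⱼ` can start afresh.
-/

section Computation

variable {σ S X : Type} {step : σ × S × X → σ × S × X → Prop}

theorem forall_getElem?_succ_iff_isChain {α : Type*} {P : α → α → Prop} {l : List α} :
    (∀ i a b, l[i]? = some a → l[i + 1]? = some b → P a b) ↔ l.IsChain P := by
  rw [List.isChain_iff_getElem]
  constructor
  · intro h i hi
    exact h i _ _ (List.getElem?_eq_getElem (by omega)) (List.getElem?_eq_getElem hi)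
  · intro h i a b ha hb
    obtain ⟨hi, rfl⟩ := List.getElem?_eq_some_iff.mp hb
    obtain ⟨-, rfl⟩ := List.getElem?_eq_some_iff.mp ha
    exact h i hi

theorem _root_.List.IsChain.and {α : Type*} {P Q : α → α → Prop} {l : List α}
    (hP : l.IsChain P) (hQ : l.IsChain Q) : l.IsChain (fun a b => P a b ∧ Q a b) :=
  List.isChain_iff_getElem.mpr fun i hi =>
    ⟨List.isChain_iff_getElem.mp hP i hi, List.isChain_iff_getElem.mp hQ i hi⟩

theorem comp_iff_isChain {w : List (σ × S × X)} :
    Comp step w ↔ w ≠ [] ∧ w.IsChain (fun c c' => EnvTr c c' ∨ step c c') := by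
  constructor
  · intro h
    induction h with
    | one c => exact ⟨List.cons_ne_nil _ _, .singleton c⟩
    | env _ ih => exact ⟨List.cons_ne_nil _ _, ih.2.cons_cons (.inl rfl)⟩
    | act hs _ ih => exact ⟨List.cons_ne_nil _ _, ih.2.cons_cons (.inr hs)⟩
  · rintro ⟨hne, hw⟩
    induction hw with
    | nil => exact absurd rfl hne
    | singleton c => exact .one c
    | @cons_cons c c' cs hcc' _ ih =>
      obtain ⟨sp, s, x⟩ := c
      obtain ⟨sp', s', x'⟩ := c'
      rcases hcc' with henv | hs
      · obtain rfl : sp = sp' := henv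
        exact .env (ih (List.cons_ne_nil _ _))
      · exact .act hs (ih (List.cons_ne_nil _ _))

theorem mem_assum_iff {pre : Set S} {R : Set (S × S)} {w : List (σ × S × X)} :
    w ∈ Assum pre R ↔ (∀ c ∈ w.head?, c.2.1 ∈ pre) ∧
      w.IsChain (fun c c' => EnvTr c c' → (c.2.1, c'.2.1) ∈ R) := by
  simp only [Assum, Set.mem_ofPred_eq, Option.mem_def, forall_getElem?_succ_iff_isChain]

theorem mem_commit_iff {fin : σ → Prop} {G : Set (S × S)} {pst : Set S}
    {w : List (σ × S × X)} :
    w ∈ Commit step fin G pst ↔ w.IsChain (fun c c' => step c c' → (c.2.1, c'.2.1) ∈ G) ∧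
      ∀ c ∈ w.getLast?, fin c.1 → c.2.1 ∈ pst := by
  simp only [Commit, Set.mem_ofPred_eq, Option.mem_def, forall_getElem?_succ_iff_isChain]

theorem concat_mem_cpts_inter_assum {sp : σ} {s : S} {x : X} {pre : Set S}
    {R : Set (S × S)} {w : List (σ × S × X)} {c d : σ × S × X}
    (hw : w ∈ cpts step sp s x ∩ Assum pre R) (hc : w.getLast? = some c)
    (hcd : EnvTr c d ∨ step c d) (hR : EnvTr c d → (c.2.1, d.2.1) ∈ R) :
    w ++ [d] ∈ cpts step sp s x ∩ Assum pre R := by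
  obtain ⟨⟨hcomp, hhead⟩, hA⟩ := hw
  obtain ⟨hne, hchain⟩ := comp_iff_isChain.mp hcomp
  obtain ⟨hpre, hrely⟩ := mem_assum_iff.mp hA
  have hhead' : (w ++ [d]).head? = some (sp, s, x) := by
    rw [List.head?_append_of_ne_nil _ hne, hhead]
  refine ⟨⟨comp_iff_isChain.mpr ⟨by simp, hchain.append (.singleton d) ?_⟩, hhead'⟩,
    mem_assum_iff.mpr ⟨by rwa [hhead', ← hhead], hrely.append (.singleton d) ?_⟩⟩ <;>
  · simp only [hc, Option.mem_def, Option.some.injEq, List.head?_cons]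
    rintro _ rfl _ rfl
    assumption

def AssumReachable (step : σ × S × X → σ × S × X → Prop) (sp : σ) (pre : Set S)
    (R : Set (S × S)) (c : σ × S × X) : Prop :=
  ∃ w s x, w ∈ cpts step sp s x ∩ Assum pre R ∧ w.getLast? = some c

variable {sp : σ} {pre : Set S} {R : Set (S × S)} {c d : σ × S × X}

theorem assumReachable_start {s : S} (x : X) (hs : s ∈ pre) :
    AssumReachable step sp pre R (sp, s, x) :=
  ⟨[(sp, s, x)], s, x, ⟨⟨.one _, rfl⟩, mem_assum_iff.mpr ⟨by simpa using hs, .singleton _⟩⟩, rfl⟩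

theorem AssumReachable.env (h : AssumReachable step sp pre R c) (hcd : EnvTr c d)
    (hR : (c.2.1, d.2.1) ∈ R) : AssumReachable step sp pre R d :=
  let ⟨w, s, x, hw, hc⟩ := h
  ⟨w ++ [d], s, x, concat_mem_cpts_inter_assum hw hc (.inl hcd) fun _ => hR,
    List.getLast?_concat⟩

theorem AssumReachable.act {fin : σ → Prop} {G : Set (S × S)} {pst : Set S}
    (hv : ∀ s x, cpts step sp s x ∩ Assum pre R ⊆ Commit step fin G pst)
    (h : AssumReachable step sp pre R c) (hcd : step c d) (hne : ¬EnvTr c d) :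
    (c.2.1, d.2.1) ∈ G ∧ (fin d.1 → d.2.1 ∈ pst) ∧ AssumReachable step sp pre R d := by
  obtain ⟨w, s, x, hw, hc⟩ := h
  have hw' := concat_mem_cpts_inter_assum hw hc (.inr hcd) fun h => absurd h hne
  obtain ⟨hguar, hpst⟩ := mem_commit_iff.mp (hv s x hw')
  refine ⟨?_, hpst d List.getLast?_concat, w ++ [d], s, x, hw', List.getLast?_concat⟩
  exact (List.isChain_append.mp hguar).2.2 c hc d rfl hcd

theorem isChain_guar_of_invariant {G : Set (S × S)} (Inv : σ × S × X → Prop)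
    {s : S} {x : X} {w : List (σ × S × X)} (hw : w ∈ cpts step sp s x)
    (hrely : w.IsChain (fun c c' => EnvTr c c' → (c.2.1, c'.2.1) ∈ R))
    (hstart : Inv (sp, s, x))
    (henv : ∀ c c', Inv c → EnvTr c c' → (c.2.1, c'.2.1) ∈ R → Inv c')
    (hact : ∀ c c', Inv c → step c c' → (c.2.1, c'.2.1) ∈ G ∧ Inv c') :
    w.IsChain (fun c c' => step c c' → (c.2.1, c'.2.1) ∈ G) := by
  obtain ⟨hcomp, hhead⟩ := hw
  have htrans := (comp_iff_isChain.mp hcomp).2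
  have hinv : ∀ c ∈ w, Inv c := by
    refine (htrans.and hrely).induction Inv w ?_ fun hne => ?_
    · rintro c c' ⟨henv' | hstep, hR⟩ hc
      · exact henv c c' hc henv' (hR henv')
      · exact (hact c c' hc hstep).2
    · rwa [(List.head_eq_iff_head?_eq_some hne).mpr hhead]
  exact htrans.imp_of_mem_imp fun c c' hc _ _ hstep => (hact c c' (hinv c hc) hstep).1

end Computation

theorem PStep.prog_ne {S : Type} {P P' : Prog S} {s s' : S} (h : PStep (P, s) (P', s')) :
    P ≠ P' := by
  induction P generalizing P' s s' with
  | seq P₁ P₂ ih₁ =>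
    cases h with
    -- `cases` refutes `P₂ = seq P₁ P₂` by acyclicity of the constructors
    | seq1 => exact fun h => by cases h
    | seq2 _ hstep => exact fun h => ih₁ hstep (Prog.seq.inj h).1
  | cond => cases h <;> exact fun h => by cases h
  | _ => cases h <;> exact fun h => by cases h

theorem EStep.event_ne {L S K : Type} [DecidableEq K] {e e' : Event L S} {s s' : S}
    {x x' : EvtCtx L S K} {l : Lbl L S K} (h : EStep (e, s, x) l (e', s', x')) : e ≠ e' := by
  cases h with
  | anony _ _ hstep => exact fun h => hstep.prog_ne (Event.anony.inj h)
  | basic => exact fun h => by cases h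

section EvtSet

variable {L S K : Type} [DecidableEq K] {n : ℕ} {es : Fin (n + 1) → Event L S}
  {pres psts : Fin (n + 1) → Set S} {Rs Gs : Fin (n + 1) → Set (S × S)}

inductive EvtSetInv (es : Fin (n + 1) → Event L S) (pres : Fin (n + 1) → Set S)
    (Rs : Fin (n + 1) → Set (S × S)) : ESConf L S K → Prop where
  | idle {s : S} {x : EvtCtx L S K} :
      (∀ i, AssumReachable estepAny (es i) (pres i) (Rs i) (es i, s, x)) →
      EvtSetInv es pres Rs (.set n es, s, x)
  | busy {i : Fin (n + 1)} {e : Event L S} {s : S} {x : EvtCtx L S K} :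
      AssumReachable estepAny (es i) (pres i) (Rs i) (e, s, x) →
      EvtSetInv es pres Rs (.seq e (.set n es), s, x)

theorem EvtSetInv.env {R : Set (S × S)} (hR : ∀ i, R ⊆ Rs i) {c c' : ESConf L S K}
    (h : EvtSetInv es pres Rs c) (hcc' : EnvTr c c') (hs : (c.2.1, c'.2.1) ∈ R) :
    EvtSetInv es pres Rs c' := by
  obtain ⟨sp', s', x'⟩ := c'
  obtain rfl : _ = sp' := hcc'
  cases h with
  | idle h => exact .idle fun i => (h i).env rfl (hR i hs)
  | busy h => exact .busy (h.env rfl (hR _ hs))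

theorem EvtSetInv.act (hv : ∀ i, evtValid (K := K) (es i) (pres i) (Rs i) (Gs i) (psts i))
    (hpst : ∀ i j, psts i ⊆ pres j) {c c' : ESConf L S K}
    (h : EvtSetInv es pres Rs c) (hcc' : esstepAny c c') :
    (c.2.1, c'.2.1) ∈ ⋃ i, Gs i ∧ EvtSetInv es pres Rs c' := by
  obtain ⟨l, hstep⟩ := hcc'
  cases h with
  | idle h =>
    cases hstep with
    | set i hE =>
      obtain ⟨hG, -, hreach⟩ := (h i).act (hv i) ⟨_, hE⟩ hE.event_ne
      exact ⟨Set.mem_iUnion_of_mem i hG, .busy hreach⟩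
  | @busy i _ _ _ h =>
    cases hstep with
    | seq1 _ hE =>
      obtain ⟨hG, -, hreach⟩ := h.act (hv i) ⟨_, hE⟩ hE.event_ne
      exact ⟨Set.mem_iUnion_of_mem i hG, .busy hreach⟩
    | seq2 _ hE =>
      obtain ⟨hG, hfin, -⟩ := h.act (hv i) ⟨_, hE⟩ hE.event_ne
      exact ⟨Set.mem_iUnion_of_mem i hG,
        .idle fun j => assumReachable_start _ (hpst i j (hfin rfl))⟩

end EvtSet

/-- **Semantic soundness of the EvtSet rule.** -/
theorem evtset_rule_sound {L S K : Type} [DecidableEq K]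
    (n : ℕ) (es : Fin (n + 1) → Event L S) (pre pst : Set S) (R G : Set (S × S))
    (pres psts : Fin (n + 1) → Set S) (Rs Gs : Fin (n + 1) → Set (S × S))
    (h1 : ∀ i, evtValid (K := K) (es i) (pres i) (Rs i) (Gs i) (psts i))
    (h2 : ∀ i j, psts i ⊆ pres j)
    (h3 : ∀ i, pre ⊆ pres i)
    (h4 : ∀ i, R ⊆ Rs i)
    (h5 : ∀ i, Gs i ⊆ G)
    (h6 : ∀ i, psts i ⊆ pst)
    (h7 : stable pre R)
    (h8 : idRel ⊆ G) :
    esysValid (K := K) (EvtSys.set n es) pre R G pst := by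
  rintro s x w ⟨hw, hA⟩
  obtain ⟨hpre, hrely⟩ := mem_assum_iff.mp hA
  have hstart : EvtSetInv es pres Rs (EvtSys.set n es, s, x) :=
    .idle fun i => assumReachable_start x (h3 i (hpre _ hw.2))
  refine mem_commit_iff.mpr ⟨?_, fun _ _ hfin => hfin.elim⟩
  refine isChain_guar_of_invariant (EvtSetInv es pres Rs) hw hrely hstart
    (fun _ _ hc => hc.env h4) fun _ _ hc hstep => ?_
  obtain ⟨hG, hinv⟩ := hc.act h1 h2 hstep
  exact ⟨Set.iUnion_subset h5 hG, hinv⟩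

end PiCore
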